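/- arXiv:1410.4048 — 3 statements merged into one kernel-verified Lean document; each statement's English description precedes it below -/
import Mathlib

section
/- Let Ω ⊂ ℝⁿ be a measurable set and let σ₀, σ₁ : Ω → ℝ be measurable with ε ≤ σ₀, σ₁ ≤ M for some 0 < ε ≤ M. Let u₀ : Ω → ℝⁿ be measurable with ∫_Ω |u₀|^p < ∞ (here u₀ plays the role of a gradient field). Then (p-1)·∫_Ω (σ₀/σ₁^{1/(p-1)})·(σ₁^{1/(p-1)} - σ₀^{1/(p-1)})·|u₀|^p dx ≤ ∫_Ω (σ₁ - σ₀)·|u₀|^p dx. -/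
open Real MeasureTheory
open scoped RealInnerProductSpace

lemma young_aux {p t : ℝ} (hp : 1 < p) (ht : 0 ≤ t) :
    p * t ^ (p - 1) ≤ 1 + (p - 1) * t ^ p := by
  have hp0 : 0 < p := by linarith
  have hp1 : 0 < p - 1 := by linarith
  have hpq := (Real.HolderConjugate.conjExponent hp).symm
  have h := Real.young_inequality_of_nonneg (Real.rpow_nonneg ht (p - 1)) zero_le_one hpq
  have hB : (t ^ (p - 1)) ^ (Real.conjExponent p) = t ^ p := by
    rw [← Real.rpow_mul ht]
    congr 1
    rw [Real.conjExponent]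
    field_simp
  rw [hB, Real.one_rpow, mul_one] at h
  have e : t ^ p / Real.conjExponent p = t ^ p * (p - 1) / p := by
    rw [Real.conjExponent]
    field_simp
  rw [e] at h
  have h' := mul_le_mul_of_nonneg_left h hp0.le
  calc p * t ^ (p - 1) ≤ p * (t ^ p * (p - 1) / p + 1 / p) := h'
    _ = 1 + (p - 1) * t ^ p := by field_simp; ring

lemma key_ineq {p a b : ℝ} (hp : 1 < p) (ha : 0 < a) (hb : 0 < b) :
    (p - 1) * ((a / b ^ (1 / (p - 1))) * (b ^ (1 / (p - 1)) - a ^ (1 / (p - 1)))) ≤ b - a := by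
  have hp1 : 0 < p - 1 := by linarith
  set q := 1 / (p - 1) with hq
  set t := (a / b) ^ q with htdef
  have hab : 0 < a / b := div_pos ha hb
  have ht : 0 < t := Real.rpow_pos_of_pos hab q
  have h1 : t ^ (p - 1) = a / b := by
    rw [htdef, ← Real.rpow_mul hab.le]
    have : q * (p - 1) = 1 := by rw [hq]; field_simp
    rw [this, Real.rpow_one]
  have h2 : t = a ^ q / b ^ q := by rw [htdef, Real.div_rpow ha.le hb.le]
  have h3 : b * t ^ (p - 1) = a := by rw [h1]; field_simp
  have h4 : b * t ^ p = a * t := by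
    have h5 : t ^ p = t ^ (p - 1) * t ^ (1:ℝ) := by
      rw [← Real.rpow_add ht]; ring_nf
    rw [Real.rpow_one] at h5
    rw [h5, ← mul_assoc, h3]
  have hy := young_aux hp ht.le
  have hy' := mul_le_mul_of_nonneg_left hy hb.le
  rw [mul_add, mul_one, show b * (p * t ^ (p - 1)) = p * (b * t ^ (p - 1)) by ring,
    show b * ((p - 1) * t ^ p) = (p - 1) * (b * t ^ p) by ring, h3, h4] at hy'
  -- hy' : p * a ≤ b + (p - 1) * (a * t)
  have hbq : (0:ℝ) < b ^ q := Real.rpow_pos_of_pos hb q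
  have e : (a / b ^ q) * (b ^ q - a ^ q) = a * (1 - t) := by
    rw [h2]; field_simp
  rw [e]
  nlinarith

theorem integral_monotonicity {n : ℕ} (p ε M : ℝ) (hp : 1 < p) (hε : 0 < ε) (hεM : ε ≤ M)
    (Ω : Set (EuclideanSpace ℝ (Fin n))) (hΩ : MeasurableSet Ω)
    (σ₀ σ₁ : EuclideanSpace ℝ (Fin n) → ℝ)
    (hσ₀m : Measurable σ₀) (hσ₁m : Measurable σ₁)
    (hσ₀ : ∀ x ∈ Ω, ε ≤ σ₀ x ∧ σ₀ x ≤ M)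
    (hσ₁ : ∀ x ∈ Ω, ε ≤ σ₁ x ∧ σ₁ x ≤ M)
    (u₀ : EuclideanSpace ℝ (Fin n) → EuclideanSpace ℝ (Fin n))
    (hu₀m : Measurable u₀)
    (hu₀i : Integrable (fun x => ‖u₀ x‖ ^ p) (volume.restrict Ω)) :
    (p - 1) * ∫ x in Ω, (σ₀ x / (σ₁ x) ^ (1 / (p - 1))) *
        ((σ₁ x) ^ (1 / (p - 1)) - (σ₀ x) ^ (1 / (p - 1))) * ‖u₀ x‖ ^ p ≤
      ∫ x in Ω, (σ₁ x - σ₀ x) * ‖u₀ x‖ ^ p := by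
  have hp1 : 0 < p - 1 := by linarith
  set q := 1 / (p - 1) with hq
  have hM : 0 < M := lt_of_lt_of_le hε hεM
  have hεq : (0:ℝ) < ε ^ q := Real.rpow_pos_of_pos hε q
  set C := M / ε ^ q * M ^ q with hC
  -- pointwise bound on the first factor
  have hbound : ∀ x ∈ Ω, |σ₀ x / (σ₁ x) ^ q * ((σ₁ x) ^ q - (σ₀ x) ^ q)| ≤ C := by
    intro x hx
    obtain ⟨h0l, h0u⟩ := hσ₀ x hx
    obtain ⟨h1l, h1u⟩ := hσ₁ x hx
    have h0 : 0 < σ₀ x := lt_of_lt_of_le hε h0l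
    have h1 : 0 < σ₁ x := lt_of_lt_of_le hε h1l
    have h1q : (0:ℝ) < (σ₁ x) ^ q := Real.rpow_pos_of_pos h1 q
    have h0q : (0:ℝ) < (σ₀ x) ^ q := Real.rpow_pos_of_pos h0 q
    have h1qM : (σ₁ x) ^ q ≤ M ^ q := Real.rpow_le_rpow h1.le h1u (by positivity)
    have h0qM : (σ₀ x) ^ q ≤ M ^ q := Real.rpow_le_rpow h0.le h0u (by positivity)
    have h1qε : ε ^ q ≤ (σ₁ x) ^ q := Real.rpow_le_rpow hε.le h1l (by positivity)
    rw [abs_mul]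
    have hA : |σ₀ x / (σ₁ x) ^ q| ≤ M / ε ^ q := by
      rw [abs_of_nonneg (div_nonneg h0.le h1q.le)]
      exact div_le_div₀ hM.le h0u hεq h1qε
    have hB : |(σ₁ x) ^ q - (σ₀ x) ^ q| ≤ M ^ q := by
      rw [abs_le]
      constructor <;> linarith
    calc |σ₀ x / (σ₁ x) ^ q| * |(σ₁ x) ^ q - (σ₀ x) ^ q|
        ≤ (M / ε ^ q) * M ^ q := mul_le_mul hA hB (abs_nonneg _) (by positivity)
      _ = C := rfl
  -- measurability
  have hm₁ : AEStronglyMeasurable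
      (fun x => σ₀ x / (σ₁ x) ^ q * ((σ₁ x) ^ q - (σ₀ x) ^ q) * ‖u₀ x‖ ^ p)
      (volume.restrict Ω) := by
    refine Measurable.aestronglyMeasurable ?_
    have hrq : Measurable fun y : ℝ => y ^ q := (Real.continuous_rpow_const (by positivity)).measurable
    have hrp : Measurable fun y : ℝ => y ^ p := (Real.continuous_rpow_const (by linarith)).measurable
    exact ((hσ₀m.div (hrq.comp hσ₁m)).mul
      ((hrq.comp hσ₁m).sub (hrq.comp hσ₀m))).mul (hrp.comp hu₀m.norm)
  have hm₂ : AEStronglyMeasurable (fun x => (σ₁ x - σ₀ x) * ‖u₀ x‖ ^ p)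
      (volume.restrict Ω) := by
    refine Measurable.aestronglyMeasurable ?_
    have hrp : Measurable fun y : ℝ => y ^ p := (Real.continuous_rpow_const (by linarith)).measurable
    exact (hσ₁m.sub hσ₀m).mul (hrp.comp hu₀m.norm)
  have hnn : ∀ x, (0:ℝ) ≤ ‖u₀ x‖ ^ p := fun x => Real.rpow_nonneg (norm_nonneg _) p
  -- integrability
  have hint₁ : Integrable
      (fun x => σ₀ x / (σ₁ x) ^ q * ((σ₁ x) ^ q - (σ₀ x) ^ q) * ‖u₀ x‖ ^ p)
      (volume.restrict Ω) := by
    refine Integrable.mono' (hu₀i.const_mul C) hm₁ ?_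
    rw [ae_restrict_iff' hΩ]
    filter_upwards with x hx
    rw [Real.norm_eq_abs, abs_mul, abs_of_nonneg (hnn x)]
    exact mul_le_mul_of_nonneg_right (hbound x hx) (hnn x)
  have hint₂ : Integrable (fun x => (σ₁ x - σ₀ x) * ‖u₀ x‖ ^ p) (volume.restrict Ω) := by
    refine Integrable.mono' (hu₀i.const_mul M) hm₂ ?_
    rw [ae_restrict_iff' hΩ]
    filter_upwards with x hx
    rw [Real.norm_eq_abs, abs_mul, abs_of_nonneg (hnn x)]
    refine mul_le_mul_of_nonneg_right ?_ (hnn x)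
    obtain ⟨h0l, h0u⟩ := hσ₀ x hx
    obtain ⟨h1l, h1u⟩ := hσ₁ x hx
    rw [abs_le]; constructor <;> linarith
  -- pointwise inequality
  rw [← MeasureTheory.integral_const_mul]
  refine setIntegral_mono_on (hint₁.const_mul _) hint₂ hΩ ?_
  intro x hx
  have h0 : 0 < σ₀ x := lt_of_lt_of_le hε (hσ₀ x hx).1
  have h1 : 0 < σ₁ x := lt_of_lt_of_le hε (hσ₁ x hx).1
  have hk := key_ineq hp h0 h1
  have := mul_le_mul_of_nonneg_right hk (hnn x)
  calc (p - 1) * (σ₀ x / (σ₁ x) ^ q * ((σ₁ x) ^ q - (σ₀ x) ^ q) * ‖u₀ x‖ ^ p)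
      = (p - 1) * (σ₀ x / (σ₁ x) ^ q * ((σ₁ x) ^ q - (σ₀ x) ^ q)) * ‖u₀ x‖ ^ p := by ring
    _ ≤ (σ₁ x - σ₀ x) * ‖u₀ x‖ ^ p := this
end

section
/- Let l : ℝ^{n-1} → ℝ be L-Lipschitz with l(0) = 0 and l ≥ 0, let δ > 0, p > 1, τ ≥ 1. Then ∫_{|y'|<δ} ∫_{l(y')}^{δ} e^{-pτ y_n} dy_n dy' ≥ (pτ)^{-1}·(∫_{|y'|<δ} e^{-pτL|y'|} dy' − C_n δ^{n-1} e^{-pδτ}), where C_n δ^{n-1} is the measure of the ball {|y'|<δ} in ℝ^{n-1} divided appropriately; in particular the left-hand side is bounded below by c·τ^{-n} for some c > 0 and all sufficiently large τ. -/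
/-!
With `q = pτ` the inner integral is `(e^{-q l(y')} - e^{-qδ}) / q`, and `l(y') ≤ L|y'|` (from the
Lipschitz bound and `l(0) = 0`) gives the first estimate. For the second, the integral of
`e^{-pτL|y'|}` over the `δ`-ball is at least `e^{-pL}` times the volume of the ball of radius `1/τ`,
that is `e^{-pL} |B_1| τ^{-(n-1)}`, while the subtracted term `|B_δ| e^{-pδτ}` decays exponentially
and is eventually at most half of it; the factor `(pτ)⁻¹` supplies the last power of `τ`.
-/

open Real MeasureTheory Metric Filter Module

theorem integral_exp_neg_mul {c : ℝ} (hc : c ≠ 0) (a b : ℝ) :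
    ∫ z in a..b, exp (-(c * z)) = (exp (-(c * a)) - exp (-(c * b))) / c := by
  rw [intervalIntegral.integral_comp_mul_left (fun x => exp (-x)) hc,
    intervalIntegral.integral_comp_neg (fun x => exp x), integral_exp, smul_eq_mul]
  field_simp

theorem le_setIntegral_intervalIntegral_exp_neg_mul {X : Type*} [MeasurableSpace X]
    {μ : Measure X} {s : Set X} (hs : MeasurableSet s) (hμs : μ s ≠ ⊤) {q : ℝ} (hq : 0 < q)
    {f l : X → ℝ} (hf : IntegrableOn f s μ) (hl : IntegrableOn (fun y => exp (-(q * l y))) s μ)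
    (hfl : ∀ y ∈ s, f y ≤ exp (-(q * l y))) (δ : ℝ) :
    q⁻¹ * ((∫ y in s, f y ∂μ) - μ.real s * exp (-(q * δ))) ≤
      ∫ y in s, (∫ z in l y..δ, exp (-(q * z))) ∂μ := by
  simp_rw [integral_exp_neg_mul hq.ne']
  rw [integral_div, integral_sub hl (integrableOn_const hμs), setIntegral_const, smul_eq_mul,
    inv_mul_eq_div]
  exact div_le_div_of_nonneg_right (sub_le_sub_right (setIntegral_mono_on hf hl hs hfl) _) hq.le

section Ball

variable {E : Type*} [NormedAddCommGroup E] [MeasurableSpace E] [BorelSpace E] [ProperSpace E]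
  (μ : Measure E) [IsFiniteMeasureOnCompacts μ]

theorem Continuous.integrableOn_ball {F : Type*} [NormedAddCommGroup F] {f : E → F}
    (hf : Continuous f) (x : E) (r : ℝ) :
    IntegrableOn f (ball x r) μ :=
  (hf.continuousOn.integrableOn_compact (isCompact_closedBall x r)).mono_set ball_subset_closedBall

theorem exp_neg_mul_mul_measureReal_ball_le_setIntegral {c r δ : ℝ} (hc : 0 ≤ c) (hrδ : r ≤ δ) :
    exp (-(c * r)) * μ.real (ball 0 r) ≤ ∫ y in ball 0 δ, exp (-(c * ‖y‖)) ∂μ := by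
  have hint : IntegrableOn (fun y : E => exp (-(c * ‖y‖))) (ball 0 δ) μ :=
    (by fun_prop : Continuous fun y : E => exp (-(c * ‖y‖))).integrableOn_ball μ 0 δ
  calc exp (-(c * r)) * μ.real (ball 0 r)
      = ∫ _ in ball (0 : E) r, exp (-(c * r)) ∂μ := by rw [setIntegral_const, smul_eq_mul, mul_comm]
    _ ≤ ∫ y in ball 0 r, exp (-(c * ‖y‖)) ∂μ := by
        refine setIntegral_mono_on (integrableOn_const measure_ball_lt_top.ne)
          (hint.mono_set (ball_subset_ball hrδ)) measurableSet_ball fun y hy => ?_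
        gcongr
        exact (mem_ball_zero_iff.1 hy).le
    _ ≤ ∫ y in ball 0 δ, exp (-(c * ‖y‖)) ∂μ :=
        setIntegral_mono_set hint (.of_forall fun _ => (exp_pos _).le)
          (ball_subset_ball hrδ).eventuallyLE

theorem le_setIntegral_ball_intervalIntegral_exp_neg_mul {l : E → ℝ} (hl : Continuous l) {L : ℝ}
    (hlL : ∀ y, l y ≤ L * ‖y‖) {q : ℝ} (hq : 0 < q) (δ : ℝ) :
    q⁻¹ * ((∫ y in ball 0 δ, exp (-(q * L * ‖y‖)) ∂μ) - μ.real (ball 0 δ) * exp (-(q * δ))) ≤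
      ∫ y in ball 0 δ, (∫ z in l y..δ, exp (-(q * z))) ∂μ := by
  refine le_setIntegral_intervalIntegral_exp_neg_mul measurableSet_ball measure_ball_lt_top.ne hq
    ((by fun_prop : Continuous fun y : E => exp (-(q * L * ‖y‖))).integrableOn_ball μ 0 δ)
    ((by fun_prop : Continuous fun y => exp (-(q * l y))).integrableOn_ball μ 0 δ)
    (fun y _ => ?_) δ
  rw [mul_assoc q]
  gcongr
  exact hlL y

end Ball

theorem eventually_mul_exp_neg_mul_le_inv_pow (C : ℝ) {b ε : ℝ} (hb : 0 < b) (hε : 0 < ε) (d : ℕ) :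
    ∀ᶠ τ in atTop, C * exp (-(b * τ)) ≤ ε * τ⁻¹ ^ d := by
  have hlo := ((isLittleO_exp_neg_mul_rpow_atTop hb (-(d : ℝ))).const_mul_left C).bound hε
  filter_upwards [hlo, eventually_gt_atTop 0] with τ hτ hτpos
  rw [rpow_neg hτpos.le, rpow_natCast, ← inv_pow, neg_mul] at hτ
  simpa [Real.norm_eq_abs, abs_of_pos hτpos] using (le_abs_self _).trans hτ

theorem exists_pos_eventually_inv_pow_finrank_le {E : Type*} [NormedAddCommGroup E]
    [NormedSpace ℝ E] [FiniteDimensional ℝ E] [MeasurableSpace E] [BorelSpace E]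
    (μ : Measure E) [μ.IsAddHaarMeasure] {a b δ : ℝ} (ha : 0 ≤ a) (hb : 0 < b) (hδ : 0 < δ) :
    ∃ κ > 0, ∀ᶠ τ in atTop, κ * τ⁻¹ ^ finrank ℝ E ≤
      (∫ y in ball 0 δ, exp (-(a * τ * ‖y‖)) ∂μ) - μ.real (ball 0 δ) * exp (-(b * τ)) := by
  set V := μ.real (ball (0 : E) 1)
  have hV : 0 < V := ENNReal.toReal_pos (measure_ball_pos μ 0 one_pos).ne' measure_ball_lt_top.ne
  refine ⟨exp (-a) * V / 2, by positivity, ?_⟩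
  filter_upwards [eventually_mul_exp_neg_mul_le_inv_pow (μ.real (ball 0 δ)) hb
    (by positivity : 0 < exp (-a) * V / 2) (finrank ℝ E), eventually_ge_atTop δ⁻¹,
    eventually_gt_atTop 0] with τ htail hτδ hτ
  have hcore := exp_neg_mul_mul_measureReal_ball_le_setIntegral μ (by positivity : 0 ≤ a * τ)
    (inv_le_of_inv_le₀ hδ hτδ)
  rw [mul_inv_cancel_right₀ hτ.ne', measureReal_def,
    Measure.addHaar_ball_of_pos μ 0 (inv_pos.2 hτ), ENNReal.toReal_mul,
    ENNReal.toReal_ofReal (by positivity), ← measureReal_def] at hcore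
  linarith

theorem graph_region_exponential_lower_general (n : ℕ) (hn : 2 ≤ n)
    (l : EuclideanSpace ℝ (Fin (n - 1)) → ℝ) (L δ p : ℝ)
    (hL : 0 < L) (hδ : 0 < δ) (hp : 1 < p)
    (hlip : ∀ y z : EuclideanSpace ℝ (Fin (n - 1)), |l y - l z| ≤ L * ‖y - z‖)
    (hl0 : l 0 = 0) :
    (∀ τ : ℝ, 1 ≤ τ →
      (p * τ)⁻¹ *
          ((∫ y in Metric.ball (0 : EuclideanSpace ℝ (Fin (n - 1))) δ,
              Real.exp (-(p * τ * L * ‖y‖))) -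
            (volume (Metric.ball (0 : EuclideanSpace ℝ (Fin (n - 1))) δ)).toReal *
              Real.exp (-(p * δ * τ))) ≤
        ∫ y in Metric.ball (0 : EuclideanSpace ℝ (Fin (n - 1))) δ,
          ∫ z in (l y)..δ, Real.exp (-(p * τ * z))) ∧
    (∃ c : ℝ, 0 < c ∧ ∃ τ₁ : ℝ, 1 ≤ τ₁ ∧ ∀ τ : ℝ, τ₁ ≤ τ →
      c * τ ^ (-(n : ℝ)) ≤
        ∫ y in Metric.ball (0 : EuclideanSpace ℝ (Fin (n - 1))) δ,
          ∫ z in (l y)..δ, Real.exp (-(p * τ * z))) := by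
  have hp0 : 0 < p := one_pos.trans hp
  have hl_le : ∀ y, l y ≤ L * ‖y‖ := fun y => by
    simpa [hl0] using (le_abs_self _).trans (hlip y 0)
  have hl_cont : Continuous l :=
    (LipschitzWith.of_dist_le' fun y z => by simpa [dist_eq_norm] using hlip y z).continuous
  have lower : ∀ τ : ℝ, 1 ≤ τ → _ := fun τ hτ =>
    le_setIntegral_ball_intervalIntegral_exp_neg_mul volume hl_cont hl_le (q := p * τ)
      (by positivity) δ
  refine ⟨fun τ hτ => by simpa only [mul_right_comm p δ τ, measureReal_def] using lower τ hτ, ?_⟩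
  obtain ⟨κ, hκ, hev⟩ := exists_pos_eventually_inv_pow_finrank_le
    (volume : Measure (EuclideanSpace ℝ (Fin (n - 1)))) (mul_pos hp0 hL).le (mul_pos hp0 hδ) hδ
  simp_rw [mul_right_comm p L, mul_right_comm p δ] at hev
  obtain ⟨τ₀, hτ₀⟩ := eventually_atTop.1 hev
  refine ⟨κ / p, by positivity, max τ₀ 1, le_max_right _ _, fun τ hτ => ?_⟩
  have hτ1 : 1 ≤ τ := (le_max_right _ _).trans hτ
  have hτ0 : 0 < τ := one_pos.trans_le hτ1
  calc κ / p * τ ^ (-(n : ℝ))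
      = (p * τ)⁻¹ * (κ * τ⁻¹ ^ finrank ℝ (EuclideanSpace ℝ (Fin (n - 1)))) := by
        obtain ⟨m, rfl⟩ : ∃ m, n = m + 1 := ⟨n - 1, by omega⟩
        rw [finrank_euclideanSpace_fin, rpow_neg (by positivity), rpow_natCast, ← inv_pow,
          Nat.add_sub_cancel, pow_succ]
        field_simp
    _ ≤ _ := mul_le_mul_of_nonneg_left (hτ₀ τ ((le_max_left _ _).trans hτ)) (by positivity)
    _ ≤ _ := lower τ hτ1

theorem graph_region_exponential_lower (n : ℕ) (hn : 2 ≤ n)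
    (l : EuclideanSpace ℝ (Fin (n - 1)) → ℝ) (L δ p : ℝ)
    (hL : 0 < L) (hδ : 0 < δ) (hp : 1 < p)
    (hlip : ∀ y z : EuclideanSpace ℝ (Fin (n - 1)), |l y - l z| ≤ L * ‖y - z‖)
    (hl0 : l 0 = 0) (hlnn : ∀ y, 0 ≤ l y)
    (hlδ : ∀ y : EuclideanSpace ℝ (Fin (n - 1)), ‖y‖ < δ → l y < δ) :
    (∀ τ : ℝ, 1 ≤ τ →
      (p * τ)⁻¹ *
          ((∫ y in Metric.ball (0 : EuclideanSpace ℝ (Fin (n - 1))) δ,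
              Real.exp (-(p * τ * L * ‖y‖))) -
            (volume (Metric.ball (0 : EuclideanSpace ℝ (Fin (n - 1))) δ)).toReal *
              Real.exp (-(p * δ * τ))) ≤
        ∫ y in Metric.ball (0 : EuclideanSpace ℝ (Fin (n - 1))) δ,
          ∫ z in (l y)..δ, Real.exp (-(p * τ * z))) ∧
    (∃ c : ℝ, 0 < c ∧ ∃ τ₁ : ℝ, 1 ≤ τ₁ ∧ ∀ τ : ℝ, τ₁ ≤ τ →
      c * τ ^ (-(n : ℝ)) ≤
        ∫ y in Metric.ball (0 : EuclideanSpace ℝ (Fin (n - 1))) δ,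
          ∫ z in (l y)..δ, Real.exp (-(p * τ * z))) :=
  graph_region_exponential_lower_general n hn l L δ p hL hδ hp hlip hl0
end

section
/- Let D ⊂ ℝⁿ (n ≥ 2) be a bounded open set with Lipschitz boundary, ρ a unit vector, h = sup_{x∈D} x·ρ, and p > 1. Then there exist C > 0 and τ₀ ≥ 1 such that for all τ ≥ τ₀, ∫_D e^{-pτ(h − x·ρ)} dx ≥ C·τ^{-n}. -/
/-!
A point `z` of `closure D` maximizing `x ↦ ⟪x, ρ⟫` has `⟪z, ρ⟫ = h` and lies on the frontier,
since a nonzero linear functional has no interior maximum. The Lipschitz graph chart at `z`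
contains the open cone `V = {v | L ‖v - ⟪v, ν⟫ • ν‖ < ⟪v, ν⟫} ∩ ball 0 r`, in the sense that
`z + t • V ⊆ D` for `0 < t ≤ 1`. On `z + τ⁻¹ • V` the exponent `p τ (h - ⟪x, ρ⟫) = -p ⟪v, ρ⟫` is
at most `|p| r`, while the volume of this set is `τ⁻ⁿ vol V`.
-/

open Real MeasureTheory
open scoped RealInnerProductSpace

/-- `D` has Lipschitz boundary: near every boundary point, after choosing a unit
direction `ν`, the set `D` coincides with the region above the graph of a Lipschitz
function defined on the hyperplane orthogonal to `ν`. -/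
def HasLipschitzBoundary {n : ℕ} (D : Set (EuclideanSpace ℝ (Fin n))) : Prop :=
  ∀ x ∈ frontier D, ∃ (ν : EuclideanSpace ℝ (Fin n)) (r L : ℝ)
      (f : EuclideanSpace ℝ (Fin n) → ℝ),
    ‖ν‖ = 1 ∧ 0 < r ∧ 0 < L ∧
    (∀ y z : EuclideanSpace ℝ (Fin n), |f y - f z| ≤ L * ‖y - z‖) ∧
    ∀ y ∈ Metric.ball x r, (y ∈ D ↔ f (y - ⟪y, ν⟫ • ν) < ⟪y, ν⟫)

open Set Metric Bornology Module
open scoped Pointwise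

theorem ContinuousLinearMap.notMem_interior_of_isMaxOn {E : Type*} [NormedAddCommGroup E]
    [NormedSpace ℝ E] {ℓ : E →L[ℝ] ℝ} (hℓ : ℓ ≠ 0) {s : Set E} {z : E} (hz : IsMaxOn ℓ s z) :
    z ∉ interior s := fun hzs =>
  hℓ ((hz.isLocalMax (mem_interior_iff_mem_nhds.mp hzs)).hasFDerivAt_eq_zero ℓ.hasFDerivAt)

section InnerProductSpace

variable {E : Type*} [NormedAddCommGroup E] [InnerProductSpace ℝ E]

theorem exists_mem_frontier_inner_eq_sSup [ProperSpace E] {D : Set E} (hne : D.Nonempty)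
    (hbd : IsBounded D) {ρ : E} (hρ : ρ ≠ 0) :
    ∃ z ∈ frontier D, ⟪z, ρ⟫ = sSup ((fun x => ⟪x, ρ⟫) '' D) := by
  have hcont : Continuous fun x : E => ⟪x, ρ⟫ := continuous_id.inner continuous_const
  obtain ⟨z, hzD, hmax⟩ :=
    hbd.isCompact_closure.exists_isMaxOn hne.closure hcont.continuousOn
  have hlub : IsLUB ((fun x => ⟪x, ρ⟫) '' D) ⟪z, ρ⟫ := by
    refine ⟨?_, fun b hb => ?_⟩
    · rintro _ ⟨x, hx, rfl⟩
      exact hmax (subset_closure hx)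
    · have hsub : D ⊆ {x | ⟪x, ρ⟫ ≤ b} := fun x hx => hb ⟨x, hx, rfl⟩
      exact closure_minimal hsub (isClosed_le hcont continuous_const) hzD
  have hmax' : IsMaxOn (innerSL ℝ ρ) (closure D) z := fun x hx => by
    simpa [real_inner_comm] using hmax hx
  refine ⟨z, ⟨hzD, fun hz => ?_⟩, (hlub.csSup_eq (hne.image _)).symm⟩
  have hℓ : innerSL ℝ ρ ≠ 0 := fun h => hρ (by simpa using DFunLike.congr_fun h ρ)
  exact (innerSL ℝ ρ).notMem_interior_of_isMaxOn hℓ hmax' (interior_mono subset_closure hz)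

theorem sub_inner_smul_add_smul (y v ν : E) (t : ℝ) :
    (y + t • v) - ⟪y + t • v, ν⟫ • ν = (y - ⟪y, ν⟫ • ν) + t • (v - ⟪v, ν⟫ • ν) := by
  simp only [inner_add_left, real_inner_smul_left]
  module

section GraphChart

variable {D : Set E} {z ν : E} {r L : ℝ} {f : E → ℝ}

theorem apply_sub_inner_smul_le_inner_of_mem_closure
    (hf : ∀ y y', |f y - f y'| ≤ L * ‖y - y'‖) (hr : 0 < r)
    (hchart : ∀ y ∈ ball z r, y ∈ D ↔ f (y - ⟪y, ν⟫ • ν) < ⟪y, ν⟫) (hz : z ∈ closure D) :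
    f (z - ⟪z, ν⟫ • ν) ≤ ⟪z, ν⟫ := by
  have hfc : Continuous f := (LipschitzWith.of_dist_le' fun y y' => by
    simpa only [dist_eq_norm, Real.norm_eq_abs] using hf y y').continuous
  have hclosed : IsClosed {y | f (y - ⟪y, ν⟫ • ν) ≤ ⟪y, ν⟫} :=
    isClosed_le (by fun_prop) (by fun_prop)
  have hsub : ball z r ∩ D ⊆ {y | f (y - ⟪y, ν⟫ • ν) ≤ ⟪y, ν⟫} := fun y hy =>
    ((hchart y hy.1).mp hy.2).le
  exact closure_minimal hsub hclosed (isOpen_ball.inter_closure ⟨mem_ball_self hr, hz⟩)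

theorem add_smul_mem_of_lt_inner (hf : ∀ y y', |f y - f y'| ≤ L * ‖y - y'‖)
    (hchart : ∀ y ∈ ball z r, y ∈ D ↔ f (y - ⟪y, ν⟫ • ν) < ⟪y, ν⟫)
    (hz : f (z - ⟪z, ν⟫ • ν) ≤ ⟪z, ν⟫) {t : ℝ} (ht₀ : 0 < t) (ht₁ : t ≤ 1) {v : E}
    (hv : L * ‖v - ⟪v, ν⟫ • ν‖ < ⟪v, ν⟫) (hvr : ‖v‖ < r) : z + t • v ∈ D := by
  have hball : z + t • v ∈ ball z r := by
    rw [mem_ball, dist_eq_norm, add_sub_cancel_left, norm_smul, Real.norm_of_nonneg ht₀.le]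
    nlinarith [norm_nonneg v]
  have hlip := hf ((z - ⟪z, ν⟫ • ν) + t • (v - ⟪v, ν⟫ • ν)) (z - ⟪z, ν⟫ • ν)
  rw [add_sub_cancel_left, norm_smul, Real.norm_of_nonneg ht₀.le] at hlip
  have hcone := mul_lt_mul_of_pos_left hv ht₀
  rw [hchart _ hball, sub_inner_smul_add_smul, inner_add_left, real_inner_smul_left]
  linarith [(abs_le.mp hlip).2]

theorem exists_isOpen_vadd_smul_subset_of_graph_chart (hν : ‖ν‖ = 1) (hr : 0 < r)
    (hf : ∀ y y', |f y - f y'| ≤ L * ‖y - y'‖)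
    (hchart : ∀ y ∈ ball z r, y ∈ D ↔ f (y - ⟪y, ν⟫ • ν) < ⟪y, ν⟫) (hz : z ∈ closure D) :
    ∃ V : Set E, IsOpen V ∧ V.Nonempty ∧ V ⊆ ball 0 r ∧
      ∀ t : ℝ, 0 < t → t ≤ 1 → z +ᵥ t • V ⊆ D := by
  have hfz := apply_sub_inner_smul_le_inner_of_mem_closure hf hr hchart hz
  refine ⟨{v | L * ‖v - ⟪v, ν⟫ • ν‖ < ⟪v, ν⟫} ∩ ball 0 r,
    (isOpen_lt (by fun_prop) (by fun_prop)).inter isOpen_ball, ⟨(r / 2) • ν, ?_, ?_⟩,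
    inter_subset_right, ?_⟩
  · have hνν : ⟪ν, ν⟫ = 1 := by rw [real_inner_self_eq_norm_sq, hν, one_pow]
    simp only [mem_ofPred_eq, real_inner_smul_left, hνν, mul_one, sub_self, norm_zero, mul_zero]
    positivity
  · rw [mem_ball_zero_iff, norm_smul, hν, mul_one, Real.norm_of_nonneg (by positivity)]
    linarith
  · rintro t ht₀ ht₁ _ ⟨_, ⟨v, ⟨hv, hvr⟩, rfl⟩, rfl⟩
    exact add_smul_mem_of_lt_inner hf hchart hfz ht₀ ht₁ hv (mem_ball_zero_iff.mp hvr)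

end GraphChart

theorem mul_sub_inner_add_inv_smul_le (p : ℝ) {τ r : ℝ} (hτ : τ ≠ 0) (z : E) {ρ v : E}
    (hρ : ‖ρ‖ ≤ 1) (hv : ‖v‖ < r) : p * τ * (⟪z, ρ⟫ - ⟪z + τ⁻¹ • v, ρ⟫) ≤ |p| * r := by
  have hvρ : |⟪v, ρ⟫| ≤ r := calc
    |⟪v, ρ⟫| ≤ ‖v‖ * ‖ρ‖ := abs_real_inner_le_norm v ρ
    _ ≤ r := by nlinarith [norm_nonneg v, norm_nonneg ρ]
  calc p * τ * (⟪z, ρ⟫ - ⟪z + τ⁻¹ • v, ρ⟫) = -(p * ⟪v, ρ⟫) := by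
        rw [inner_add_left, real_inner_smul_left]
        field_simp
        ring
    _ ≤ |p| * |⟪v, ρ⟫| := by
        rw [← abs_mul]
        exact neg_le_abs _
    _ ≤ |p| * r := by gcongr

theorem addHaar_real_vadd_smul_of_nonneg [FiniteDimensional ℝ E] [MeasurableSpace E]
    [BorelSpace E] (μ : Measure E) [μ.IsAddHaarMeasure] (z : E) {t : ℝ} (ht : 0 ≤ t)
    (s : Set E) : μ.real (z +ᵥ t • s) = t ^ finrank ℝ E * μ.real s := by
  rw [measureReal_def, measure_vadd, Measure.addHaar_smul_of_nonneg μ ht, ENNReal.toReal_mul,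
    ENNReal.toReal_ofReal (by positivity), measureReal_def]

end InnerProductSpace

theorem mul_measureReal_le_setIntegral_of_subset {X : Type*} [MeasurableSpace X]
    {μ : Measure X} {f : X → ℝ} {s t : Set X} {c : ℝ} (hs : MeasurableSet s) (hst : s ⊆ t)
    (hμt : μ t ≠ ⊤) (hf : IntegrableOn f t μ) (hf₀ : 0 ≤ f) (hc : ∀ x ∈ s, c ≤ f x) :
    c * μ.real s ≤ ∫ x in t, f x ∂μ :=
  (setIntegral_ge_of_const_le_real hs (measure_ne_top_of_subset hst hμt) hc
    (hf.mono_set hst)).trans (setIntegral_mono_set hf (.of_forall hf₀) hst.eventuallyLE)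

theorem lower_bound_near_support_plane_general {n : ℕ}
    (D : Set (EuclideanSpace ℝ (Fin n))) (hDne : D.Nonempty)
    (hDbd : Bornology.IsBounded D)
    (hDlip : HasLipschitzBoundary D)
    (ρ : EuclideanSpace ℝ (Fin n)) (hρ : ‖ρ‖ = 1)
    (h : ℝ) (hh : h = sSup ((fun x => ⟪x, ρ⟫) '' D))
    (p : ℝ) :
    ∃ C : ℝ, 0 < C ∧ ∃ τ₀ : ℝ, 1 ≤ τ₀ ∧ ∀ τ : ℝ, τ₀ ≤ τ →
      C * τ ^ (-(n : ℝ)) ≤ ∫ x in D, Real.exp (-(p * τ * (h - ⟪x, ρ⟫))) := by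
  obtain ⟨z, hzD, hz⟩ :=
    exists_mem_frontier_inner_eq_sSup hDne hDbd (ne_zero_of_norm_ne_zero (hρ ▸ one_ne_zero))
  obtain rfl : h = ⟪z, ρ⟫ := hh.trans hz.symm
  obtain ⟨ν, r, L, f, hν, hr, -, hf, hchart⟩ := hDlip z hzD
  obtain ⟨V, hVopen, hVne, hVr, hVD⟩ :=
    exists_isOpen_vadd_smul_subset_of_graph_chart hν hr hf hchart hzD.1
  have hV : 0 < volume.real V := ENNReal.toReal_pos (hVopen.measure_pos volume hVne).ne'
    (isBounded_ball.subset hVr).measure_lt_top.ne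
  refine ⟨exp (-(|p| * r)) * volume.real V, by positivity, 1, le_rfl, fun τ hτ => ?_⟩
  have hτ₀ : 0 < τ := one_pos.trans_le hτ
  have hint : IntegrableOn (fun x => exp (-(p * τ * (⟪z, ρ⟫ - ⟪x, ρ⟫)))) D :=
    ((by fun_prop : Continuous _).continuousOn.integrableOn_compact
      hDbd.isCompact_closure).mono_set subset_closure
  calc exp (-(|p| * r)) * volume.real V * τ ^ (-(n : ℝ))
      = exp (-(|p| * r)) * volume.real (z +ᵥ τ⁻¹ • V) := by
        rw [addHaar_real_vadd_smul_of_nonneg volume z (inv_nonneg.mpr hτ₀.le),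
          finrank_euclideanSpace_fin, Real.rpow_neg hτ₀.le, Real.rpow_natCast, inv_pow]
        ring
    _ ≤ _ := by
      refine mul_measureReal_le_setIntegral_of_subset
        ((hVopen.smul₀ (inv_ne_zero hτ₀.ne')).vadd z).measurableSet
        (hVD _ (inv_pos.mpr hτ₀) (inv_le_one_of_one_le₀ hτ)) hDbd.measure_lt_top.ne hint
        (fun x => (exp_pos _).le) ?_
      rintro _ ⟨_, ⟨v, hv, rfl⟩, rfl⟩
      exact exp_le_exp.mpr (neg_le_neg
        (mul_sub_inner_add_inv_smul_le p hτ₀.ne' z hρ.le (mem_ball_zero_iff.mp (hVr hv))))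

theorem lower_bound_near_support_plane {n : ℕ} (hn : 2 ≤ n)
    (D : Set (EuclideanSpace ℝ (Fin n))) (hDne : D.Nonempty)
    (hDopen : IsOpen D) (hDbd : Bornology.IsBounded D)
    (hDlip : HasLipschitzBoundary D)
    (ρ : EuclideanSpace ℝ (Fin n)) (hρ : ‖ρ‖ = 1)
    (h : ℝ) (hh : h = sSup ((fun x => ⟪x, ρ⟫) '' D))
    (p : ℝ) (hp : 1 < p) :
    ∃ C : ℝ, 0 < C ∧ ∃ τ₀ : ℝ, 1 ≤ τ₀ ∧ ∀ τ : ℝ, τ₀ ≤ τ →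
      C * τ ^ (-(n : ℝ)) ≤ ∫ x in D, Real.exp (-(p * τ * (h - ⟪x, ρ⟫))) :=
  lower_bound_near_support_plane_general D hDne hDbd hDlip ρ hρ h hh p
end
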